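/- arXiv:2410.22639 — 3 statements merged into one kernel-verified Lean document; each statement's English description precedes it below -/
import Mathlib

section
/- Let R be a local commutative ring with residue field of characteristic ≠ 2. Then O₂(R) = { diag(α, α⁻¹) : α ∈ R* } ∪ { antidiag(α⁻¹, α) : α ∈ R* }, where O₂(R) is defined with respect to the form S = [[0,1],[1,0]]. That is, a 2×2 matrix M over R satisfies MᵀSM = S if and only if M = [[α,0],[0,α⁻¹]] or M = [[0,α⁻¹],[α,0]] for some unit α of R. -/
/-!
For `M = !![a, b; c, d]` one has `MᵀSM = !![2ac, ad + bc; ad + bc, 2bd]`. As `2` is a unit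
(its residue is nonzero), `M` is orthogonal iff `ac = bd = 0` and `ad + bc = 1`. In a local ring
one of `ad`, `bc` is then a unit, and the two vanishing products kill the other pair of entries.
-/

/-- The split symmetric bilinear form `S = [[0,1],[1,0]]`. -/
def splitForm2 (R : Type*) [CommRing R] : Matrix (Fin 2) (Fin 2) R :=
  !![0, 1; 1, 0]

theorem IsLocalRing.isUnit_two_of_ringChar_residueField_ne_two {R : Type*} [CommRing R]
    [IsLocalRing R] (hchar : ringChar (ResidueField R) ≠ 2) : IsUnit (2 : R) := by
  rw [← residue_ne_zero_iff_isUnit, map_ofNat]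
  exact Ring.two_ne_zero hchar

section CommRing

variable {R : Type*} [CommRing R]

open Matrix in
theorem transpose_mul_splitForm2_mul_fin_two (a b c d : R) :
    (!![a, b; c, d]).transpose * splitForm2 R * !![a, b; c, d] =
      !![2 * (a * c), a * d + b * c; a * d + b * c, 2 * (b * d)] := by
  rw [splitForm2, (!![a, b; c, d]).transpose.eta_fin_two]
  simp only [mul_fin_two, transpose_apply, of_apply, cons_val', cons_val_zero, cons_val_one,
    cons_val_fin_one]
  ring_nf

theorem transpose_mul_splitForm2_mul_eq_splitForm2_iff (h2 : IsUnit (2 : R)) (a b c d : R) :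
    (!![a, b; c, d]).transpose * splitForm2 R * !![a, b; c, d] = splitForm2 R ↔
      a * c = 0 ∧ b * d = 0 ∧ a * d + b * c = 1 := by
  rw [transpose_mul_splitForm2_mul_fin_two, splitForm2]
  simp only [EmbeddingLike.apply_eq_iff_eq, Matrix.vecCons_inj, and_true, h2.mul_right_eq_zero]
  tauto

theorem exists_unit_of_isUnit_mul_of_add_mul_eq_one {a b c d : R} (had : IsUnit (a * d))
    (hac : a * c = 0) (hbd : b * d = 0) (h : a * d + b * c = 1) :
    ∃ α : Rˣ, a = α ∧ b = 0 ∧ c = 0 ∧ d = ↑α⁻¹ := by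
  have hb : b = 0 := (isUnit_of_mul_isUnit_right had).mul_left_eq_zero.mp hbd
  have hc : c = 0 := (isUnit_of_mul_isUnit_left had).mul_right_eq_zero.mp hac
  rw [hb, zero_mul, add_zero] at h
  exact ⟨⟨a, d, h, mul_comm d a ▸ h⟩, rfl, hb, hc, rfl⟩

end CommRing

theorem IsLocalRing.mul_eq_zero_and_add_eq_one_iff {R : Type*} [CommRing R] [IsLocalRing R]
    {a b c d : R} :
    a * c = 0 ∧ b * d = 0 ∧ a * d + b * c = 1 ↔
      ∃ α : Rˣ, (a = α ∧ b = 0 ∧ c = 0 ∧ d = ↑α⁻¹) ∨ (a = 0 ∧ b = ↑α⁻¹ ∧ c = α ∧ d = 0) := by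
  constructor
  · rintro ⟨hac, hbd, h⟩
    rcases isUnit_or_isUnit_of_isUnit_add (h ▸ isUnit_one) with had | hbc
    · obtain ⟨α, hα⟩ := exists_unit_of_isUnit_mul_of_add_mul_eq_one had hac hbd h
      exact ⟨α, .inl hα⟩
    · obtain ⟨α, hc, hd, ha, hb⟩ :=
        exists_unit_of_isUnit_mul_of_add_mul_eq_one (a := c) (b := d) (c := a) (d := b)
          (mul_comm b c ▸ hbc) (mul_comm a c ▸ hac) (mul_comm b d ▸ hbd)
          (by rw [mul_comm c, mul_comm d, add_comm, h])
      exact ⟨α, .inr ⟨ha, hb, hc, hd⟩⟩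
  · rintro ⟨α, ⟨rfl, rfl, rfl, rfl⟩ | ⟨rfl, rfl, rfl, rfl⟩⟩ <;> simp

theorem orthogonal_group_two_characterization
    {R : Type*} [CommRing R] [IsLocalRing R]
    (hchar : ringChar (IsLocalRing.ResidueField R) ≠ 2)
    (M : Matrix (Fin 2) (Fin 2) R) :
    M.transpose * splitForm2 R * M = splitForm2 R ↔
      ∃ α : Rˣ, M = !![(α : R), 0; 0, ((α⁻¹ : Rˣ) : R)] ∨
        M = !![0, ((α⁻¹ : Rˣ) : R); (α : R), 0] := by
  rw [M.eta_fin_two, transpose_mul_splitForm2_mul_eq_splitForm2_iff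
    (IsLocalRing.isUnit_two_of_ringChar_residueField_ne_two hchar),
    IsLocalRing.mul_eq_zero_and_add_eq_one_iff]
  simp only [EmbeddingLike.apply_eq_iff_eq, Matrix.vecCons_inj, and_true, and_assoc]
end

section
/- Let R be a local commutative ring, n ≥ 2, and x ∈ Rⁿ. If the ideal generated by the entries of x equals R and xᵀSx = 0 (for the split symmetric form S), then there exists M ∈ Oₙ(R) with M·e₁ = x. -/
open Matrix

/-- The split symmetric form: for `n = 2l`, `S = [[0,Iₗ],[Iₗ,0]]`;
for `n = 2l+1`, `S = [[0,Iₗ,0],[Iₗ,0,0],[0,0,1]]`. -/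
def splitForm (R : Type*) [CommRing R] (n : ℕ) : Matrix (Fin n) (Fin n) R :=
  Matrix.of fun i j =>
    if ((i : ℕ) < n / 2 ∧ (j : ℕ) = i + n / 2) ∨
       ((j : ℕ) < n / 2 ∧ (i : ℕ) = j + n / 2) ∨
       ((i : ℕ) = j ∧ (i : ℕ) = 2 * (n / 2)) then 1 else 0


private def natσ (l m : ℕ) : ℕ :=
  if m < l then m + l else if m < 2 * l then m - l else m

private def natπ (l kv pv m : ℕ) : ℕ :=
  if m = 0 then kv else if m = kv then 0 else if m = l then pv else if m = pv then l else m

set_option maxHeartbeats 1000000 in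
private lemma natσ_invol (l m : ℕ) : natσ l (natσ l m) = m := by
  unfold natσ; split_ifs <;> omega

set_option maxHeartbeats 1000000 in
private lemma natπ_inv (l kv pv m : ℕ) (hl : 1 ≤ l)
    (hkp : (kv < l ∧ pv = kv + l) ∨ (l ≤ kv ∧ kv < 2 * l ∧ pv + l = kv)) :
    natπ l kv pv (natπ l kv pv m) = m := by
  unfold natπ; split_ifs <;> omega

set_option maxHeartbeats 1000000 in
private lemma natπ_comm (l kv pv m : ℕ) (hl : 1 ≤ l)
    (hkp : (kv < l ∧ pv = kv + l) ∨ (l ≤ kv ∧ kv < 2 * l ∧ pv + l = kv)) :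
    natσ l (natπ l kv pv m) = natπ l kv pv (natσ l m) := by
  unfold natσ natπ; split_ifs <;> omega

set_option maxHeartbeats 1600000 in
theorem unimodular_isotropic_is_in_orthogonal_orbit
    {R : Type*} [CommRing R] [IsLocalRing R] (n : ℕ) (hn : 2 ≤ n) (x : Fin n → R)
    (hx : Ideal.span (Set.range x) = ⊤) (hiso : x ⬝ᵥ (splitForm R n *ᵥ x) = 0) :
    ∃ M : Matrix (Fin n) (Fin n) R,
      Mᵀ * splitForm R n * M = splitForm R n ∧
      M *ᵥ Pi.single (⟨0, by omega⟩ : Fin n) 1 = x := by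
  set l := n / 2 with hl
  have hl1 : 1 ≤ l := by omega
  have hln : l < n := by omega
  set i0 : Fin n := ⟨0, by omega⟩ with hi0
  set il : Fin n := ⟨l, hln⟩ with hil
  set σ : Fin n → Fin n := fun i =>
    ⟨natσ l (i : ℕ), by have := i.isLt; unfold natσ; split_ifs <;> omega⟩ with hσ
  have hσval : ∀ i : Fin n, ((σ i : Fin n) : ℕ) = natσ l (i : ℕ) := fun i => rfl
  have h0v : (i0 : ℕ) = 0 := rfl
  have hlv : (il : ℕ) = l := rfl
  have hσσ : ∀ i, σ (σ i) = i := by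
    intro i
    apply Fin.ext
    rw [hσval, hσval]
    exact natσ_invol l i
  have hσinj : ∀ a b : Fin n, σ a = σ b → a = b := by
    intro a b h
    have : σ (σ a) = σ (σ b) := by rw [h]
    rwa [hσσ, hσσ] at this
  have hS : ∀ i j, splitForm R n i j = if j = σ i then 1 else 0 := by
    intro i j
    have hi := i.isLt; have hj := j.isLt
    have : (((i : ℕ) < n / 2 ∧ (j : ℕ) = i + n / 2) ∨
       ((j : ℕ) < n / 2 ∧ (i : ℕ) = j + n / 2) ∨
       ((i : ℕ) = j ∧ (i : ℕ) = 2 * (n / 2))) ↔ (j = σ i) := by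
      rw [Fin.ext_iff, hσval]
      unfold natσ
      split_ifs <;> omega
    simp only [splitForm, Matrix.of_apply]
    rw [if_congr this rfl rfl]
  have hσ0 : σ i0 = il := by
    apply Fin.ext; rw [hσval, h0v, hlv]; unfold natσ; split_ifs <;> omega
  have hσl : σ il = i0 := by
    apply Fin.ext; rw [hσval, h0v, hlv]; unfold natσ; split_ifs <;> omega
  have h0l : i0 ≠ il := by
    simp only [ne_eq, Fin.ext_iff, h0v, hlv]; omega
  have hfix : ∀ a : Fin n, σ a = a ↔ (a : ℕ) = 2 * l := by
    intro a
    have := a.isLt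
    rw [Fin.ext_iff, hσval]
    unfold natσ
    split_ifs <;> omega
  clear_value σ
  -- bilinear form as a sum
  have hB : ∀ u w : Fin n → R, u ⬝ᵥ (splitForm R n *ᵥ w) = ∑ i, u i * w (σ i) := by
    intro u w
    simp only [dotProduct, mulVec]
    refine Finset.sum_congr rfl fun i _ => ?_
    congr 1
    simp only [dotProduct, hS, ite_mul, one_mul, zero_mul]
    simp [Finset.sum_ite_eq']
  have hiso' : ∑ i, x i * x (σ i) = 0 := by rw [← hB]; exact hiso
  -- extraction of a unit coordinate with σ k ≠ k
  have hunit : ∃ k, IsUnit (x k) ∧ σ k ≠ k := by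
    by_contra hcon
    push_neg at hcon
    have hmem : ∀ j, x j ∈ IsLocalRing.maximalIdeal R := by
      intro j
      by_cases hu : IsUnit (x j)
      · exfalso
        have hfj := hcon j hu
        have hrest : ∀ i, i ≠ j → x i ∈ IsLocalRing.maximalIdeal R := by
          intro i hij
          have hnf : σ i ≠ i := by
            intro hfi
            exact hij (Fin.ext (by rw [(hfix i).mp hfi, (hfix j).mp hfj]))
          by_cases hui : IsUnit (x i)
          · exact absurd (hcon i hui) hnf
          · exact (IsLocalRing.mem_maximalIdeal _).mpr hui
        have hsplit : (∑ i ∈ Finset.univ.erase j, x i * x (σ i)) + x j * x j = 0 := by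
          have h0 := Finset.sum_erase_add Finset.univ (fun i => x i * x (σ i))
            (Finset.mem_univ j)
          rw [hiso', hfj] at h0
          exact h0
        have hsq : x j * x j ∈ IsLocalRing.maximalIdeal R := by
          have : x j * x j = -∑ i ∈ Finset.univ.erase j, x i * x (σ i) :=
            eq_neg_of_add_eq_zero_right hsplit
          rw [this]
          refine neg_mem (Ideal.sum_mem _ fun i hi => ?_)
          exact Ideal.mul_mem_right _ _ (hrest i (Finset.ne_of_mem_erase hi))
        rcases (IsLocalRing.maximalIdeal.isMaximal R).isPrime.mem_or_mem hsq with h | h <;>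
          exact (IsLocalRing.notMem_maximalIdeal.mpr hu) h
      · exact (IsLocalRing.mem_maximalIdeal _).mpr hu
    have hle : Ideal.span (Set.range x) ≤ IsLocalRing.maximalIdeal R := by
      rw [Ideal.span_le]
      rintro _ ⟨k, rfl⟩
      exact hmem k
    rw [hx] at hle
    exact (IsLocalRing.maximalIdeal.isMaximal R).ne_top (top_le_iff.mp hle)
  obtain ⟨k, hk, hknf⟩ := hunit
  obtain ⟨v, hv⟩ := hk
  set p : Fin n := σ k with hp
  clear_value p
  have hσp : σ p = k := by rw [hp]; exact hσσ k
  have hpk : p ≠ k := hknf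
  have hσpp : σ p ≠ p := by rw [hσp]; exact Ne.symm hpk
  have hkl_lin : ((k : ℕ) < l ∧ (p : ℕ) = (k : ℕ) + l) ∨
      (l ≤ (k : ℕ) ∧ (k : ℕ) < 2 * l ∧ (p : ℕ) + l = (k : ℕ)) := by
    have h := hσval k
    have hne : (p : ℕ) ≠ (k : ℕ) := fun hh => hpk (Fin.ext hh)
    rw [← hp] at h
    unfold natσ at h
    split_ifs at h <;> omega
  -- the permutation
  set π : Fin n → Fin n := fun j =>
    if (j : ℕ) = 0 then k else if (j : ℕ) = (k : ℕ) then i0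
    else if (j : ℕ) = l then p else if (j : ℕ) = (p : ℕ) then il else j with hπ
  have hπval : ∀ j : Fin n, ((π j : Fin n) : ℕ) = natπ l (k : ℕ) (p : ℕ) (j : ℕ) := by
    intro j
    rw [hπ]
    simp only []
    unfold natπ
    split_ifs <;> rfl
  clear_value π
  have hπ0 : π i0 = k := by
    apply Fin.ext; rw [hπval, h0v]; unfold natπ; simp
  have hπinv : ∀ j, π (π j) = j := by
    intro j
    apply Fin.ext
    rw [hπval, hπval]
    exact natπ_inv l _ _ _ hl1 hkl_lin
  have hπinj : ∀ a b : Fin n, π a = π b → a = b := by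
    intro a b h
    have h2 : π (π a) = π (π b) := by rw [h]
    rwa [hπinv, hπinv] at h2
  have hπcomm : ∀ j, σ (π j) = π (σ j) := by
    intro j
    apply Fin.ext
    rw [hσval, hπval, hπval, hσval]
    exact natπ_comm l _ _ _ hl1 hkl_lin
  -- basis vectors and columns
  set e : Fin n → Fin n → R := fun a i => if i = a then 1 else 0 with he
  have hBe : ∀ (a : Fin n) (w : Fin n → R), (∑ i, e a i * w (σ i)) = w (σ a) := by
    intro a w
    simp only [he, ite_mul, one_mul, zero_mul]
    simp [Finset.sum_ite_eq']
  have hepσp : e p (σ p) = 0 := by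
    simp only [he]
    exact if_neg hσpp
  have hepk : e p k = 0 := by
    simp only [he]
    exact if_neg (Ne.symm hpk)
  have hve : (↑v⁻¹ : R) * x k = 1 := by rw [← hv]; exact v.inv_mul
  set t : Fin n → R := fun j => (↑v⁻¹ : R) * x (σ (π j)) with ht
  set c : Fin n → Fin n → R := fun j =>
    if j = i0 then x
    else if j = il then (fun i => (↑v⁻¹ : R) * e p i)
    else (fun i => e (π j) i - t j * e p i) with hc
  have hc0 : c i0 = x := by rw [hc]; simp
  have hcl : c il = fun i => (↑v⁻¹ : R) * e p i := by
    rw [hc]; simp [Ne.symm h0l]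
  have hcm : ∀ m, m ≠ i0 → m ≠ il → c m = fun i => e (π m) i - t m * e p i := by
    intro m h1 h2; rw [hc]; simp [h1, h2]
  -- row evaluations
  have hrowl : ∀ w : Fin n → R, (∑ i, c il i * w (σ i)) = (↑v⁻¹ : R) * w (σ p) := by
    intro w
    rw [hcl, ← hBe p w, Finset.mul_sum]
    exact Finset.sum_congr rfl fun i _ => by ring
  have hrowg : ∀ (j : Fin n) (w : Fin n → R), j ≠ i0 → j ≠ il →
      (∑ i, c j i * w (σ i)) = w (σ (π j)) - t j * w k := by
    intro j w h1 h2
    rw [hcm j h1 h2]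
    have hsplit2 : (∑ i, (e (π j) i - t j * e p i) * w (σ i))
        = (∑ i, e (π j) i * w (σ i)) - t j * (∑ i, e p i * w (σ i)) := by
      rw [Finset.mul_sum, ← Finset.sum_sub_distrib]
      exact Finset.sum_congr rfl fun i _ => by ring
    rw [hsplit2, hBe, hBe, hσp]
  -- non-membership lemmas
  have hπnp : ∀ j, j ≠ i0 → e p (σ (π j)) = 0 := by
    intro j h1
    simp only [he]
    refine if_neg (fun hcon => ?_)
    have h2 : π j = σ p := hσinj (π j) (σ p) (by rw [hσσ]; exact hcon)
    rw [hσp, ← hπ0] at h2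
    exact h1 (hπinj j i0 h2)
  have hπnk : ∀ m, m ≠ i0 → e (π m) k = 0 := by
    intro m h1
    simp only [he]
    refine if_neg (fun hcon => ?_)
    rw [← hπ0] at hcon
    exact h1 (hπinj m i0 hcon.symm)
  -- symmetry
  have hsymm : ∀ u w : Fin n → R, (∑ i, u i * w (σ i)) = (∑ i, w i * u (σ i)) := by
    intro u w
    refine Fintype.sum_equiv (Function.Involutive.toPerm σ hσσ) _ _ fun i => ?_
    show u i * w (σ i) = w (σ i) * u (σ (σ i))
    rw [hσσ]
    ring
  have hSsym : ∀ a b, splitForm R n a b = splitForm R n b a := by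
    intro a b
    rw [hS, hS]
    refine if_congr ⟨fun h => by rw [h, hσσ], fun h => by rw [h, hσσ]⟩ rfl rfl
  -- the Gram computation
  have key : ∀ j m, (∑ i, c j i * c m (σ i)) = splitForm R n j m := by
    have c00 : (∑ i, c i0 i * c i0 (σ i)) = splitForm R n i0 i0 := by
      rw [hc0, hiso', hS, hσ0, if_neg h0l]
    have cl0 : (∑ i, c il i * c i0 (σ i)) = splitForm R n il i0 := by
      rw [hrowl, hc0, hσp, hve, hS, hσl, if_pos rfl]
    have cll : (∑ i, c il i * c il (σ i)) = splitForm R n il il := by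
      rw [hrowl, hcl]
      simp only [hepσp, mul_zero]
      rw [hS, hσl, if_neg (Ne.symm h0l)]
    have cg0 : ∀ m, m ≠ i0 → m ≠ il → (∑ i, c m i * c i0 (σ i)) = splitForm R n m i0 := by
      intro m h1 h2
      rw [hrowg m (c i0) h1 h2, hc0, ht]
      have h3 : x (σ (π m)) - (↑v⁻¹ : R) * x (σ (π m)) * x k = 0 := by
        have h4 : (↑v⁻¹ : R) * x (σ (π m)) * x k = x (σ (π m)) * ((↑v⁻¹ : R) * x k) := by
          ring
        rw [h4, hve, mul_one, sub_self]
      rw [h3, hS]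
      rw [if_neg (fun hcon : i0 = σ m => h2 (hσinj m il (by rw [← hcon, hσl])))]
    have cgl : ∀ m, m ≠ i0 → m ≠ il → (∑ i, c m i * c il (σ i)) = splitForm R n m il := by
      intro m h1 h2
      rw [hrowg m (c il) h1 h2, hcl]
      simp only [hπnp m h1, hepk, mul_zero, sub_zero]
      rw [hS]
      rw [if_neg (fun hcon : il = σ m => h1 (hσinj m i0 (by rw [← hcon, hσ0])))]
    have cgg : ∀ j m, j ≠ i0 → j ≠ il → m ≠ i0 → m ≠ il →
        (∑ i, c j i * c m (σ i)) = splitForm R n j m := by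
      intro j m hj1 hj2 hm1 hm2
      rw [hrowg j (c m) hj1 hj2, hcm m hm1 hm2]
      simp only [hπnp j hj1, hπnk m hm1, hepk, mul_zero, sub_zero, zero_sub, mul_neg,
        neg_zero]
      rw [hS]
      simp only [he]
      refine if_congr ?_ rfl rfl
      rw [hπcomm]
      exact ⟨fun h => (hπinj (σ j) m h).symm, fun h => by rw [h]⟩
    intro j m
    by_cases hj1 : j = i0
    · subst hj1
      by_cases hm1 : m = i0
      · subst hm1; exact c00
      · by_cases hm2 : m = il
        · subst hm2; rw [hsymm, hSsym]; exact cl0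
        · rw [hsymm, hSsym]; exact cg0 m hm1 hm2
    · by_cases hj2 : j = il
      · subst hj2
        by_cases hm1 : m = i0
        · subst hm1; exact cl0
        · by_cases hm2 : m = il
          · subst hm2; exact cll
          · rw [hsymm, hSsym]; exact cgl m hm1 hm2
      · by_cases hm1 : m = i0
        · subst hm1; exact cg0 j hj1 hj2
        · by_cases hm2 : m = il
          · subst hm2; exact cgl j hj1 hj2
          · exact cgg j m hj1 hj2 hm1 hm2
  -- the matrix
  set M : Matrix (Fin n) (Fin n) R := Matrix.of (fun i j => c j i) with hM
  refine ⟨M, ?_, ?_⟩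
  · ext j m
    have hentry : (Mᵀ * splitForm R n * M) j m = ∑ i, M i j * M (σ i) m := by
      simp only [Matrix.mul_apply, Matrix.transpose_apply, Finset.sum_mul]
      rw [Finset.sum_comm]
      refine Finset.sum_congr rfl fun i _ => ?_
      simp only [hS, mul_ite, mul_one, mul_zero, ite_mul, zero_mul]
      simp [Finset.sum_ite_eq']
    rw [hentry]
    exact key j m
  · show M *ᵥ Pi.single i0 1 = x
    rw [Matrix.mulVec_single]
    funext i
    show c i0 i * 1 = x i
    rw [hc0, mul_one]
end

section
/- Let R be a local commutative ring with residue field of characteristic ≠ 2, I ⊊ R a proper ideal, n ≥ 2. Let Cₙ(R) = {x ∈ Rⁿ : (x) = R and xᵀSx = 0} for the split form S. Then the reduction map ρ_I : Rⁿ → (R/I)ⁿ maps Cₙ(R) onto Cₙ(R/I), and |Cₙ(R)| = |Cₙ(R/I)| · |I|^{n−1} whenever these sets are finite. -/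
/-!
With `σ` the involution pairing `i` with `i + n / 2` (and fixing the last index when `n` is odd),
the quadratic form is `q x = ∑ i, x i * x (σ i)`. For `σ j ≠ j` it is affine in the coordinate
`x j`, with slope `2 * x (σ j)`. A vector of `Cₙ(R ⧸ I)` has a unit coordinate `y (σ j)` at a
paired index: were the unpaired coordinate the only unit, its square would vanish in the residue
field. Hence every lift to `R` of the other `n - 1` coordinates of `y`, a coset of `I ^ (n - 1)`,
extends in exactly one way to an isotropic vector, and one Newton step shows that this extension
reduces to `y`. Each fibre of the reduction map is therefore in bijection with `I ^ (n - 1)`,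
which gives surjectivity and the count at once, finite or not.
-/

open Matrix

/-- The set `Cₙ(R)` of unimodular isotropic vectors. -/
def unimodIsotropic (R : Type*) [CommRing R] (n : ℕ) : Set (Fin n → R) :=
  {x | Ideal.span (Set.range x) = ⊤ ∧ x ⬝ᵥ (splitForm R n *ᵥ x) = 0}

def splitPartner (n : ℕ) (i : Fin n) : Fin n :=
  if h : (i : ℕ) < n / 2 then ⟨i + n / 2, by omega⟩
  else if h : (i : ℕ) < 2 * (n / 2) then ⟨i - n / 2, by omega⟩
  else i

section SplitPartner

variable {n : ℕ}

lemma val_splitPartner (i : Fin n) :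
    (splitPartner n i : ℕ) =
      if (i : ℕ) < n / 2 then i + n / 2 else if (i : ℕ) < 2 * (n / 2) then i - n / 2 else i := by
  unfold splitPartner
  split_ifs <;> rfl

@[simp]
lemma splitPartner_splitPartner (i : Fin n) : splitPartner n (splitPartner n i) = i := by
  have h₁ := val_splitPartner i
  have h₂ := val_splitPartner (splitPartner n i)
  ext
  split_ifs at h₁ h₂ <;> omega

lemma splitPartner_eq_self_iff {i : Fin n} : splitPartner n i = i ↔ 2 * (n / 2) ≤ i := by
  have h := val_splitPartner i
  rw [Fin.ext_iff]
  split_ifs at h <;> omega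

lemma eq_of_splitPartner_eq_self {i k : Fin n} (hi : splitPartner n i = i)
    (hk : splitPartner n k = k) : i = k := by
  rw [splitPartner_eq_self_iff] at hi hk
  ext
  omega

end SplitPartner

section SplitQuad

variable {R : Type*} [CommRing R] {n : ℕ}

lemma splitForm_apply (i j : Fin n) :
    splitForm R n i j = if j = splitPartner n i then 1 else 0 := by
  have h := val_splitPartner i
  have hi := i.isLt
  have hj := j.isLt
  refine if_congr ?_ rfl rfl
  rw [Fin.ext_iff]
  split_ifs at h <;> omega

def splitQuad (x : Fin n → R) : R := ∑ i, x i * x (splitPartner n i)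

lemma dotProduct_splitForm_mulVec (x : Fin n → R) :
    x ⬝ᵥ (splitForm R n *ᵥ x) = splitQuad x := by
  simp [dotProduct, mulVec, splitForm_apply, splitQuad]

lemma mem_unimodIsotropic_iff {x : Fin n → R} :
    x ∈ unimodIsotropic R n ↔ Ideal.span (Set.range x) = ⊤ ∧ splitQuad x = 0 := by
  change _ ∧ _ = 0 ↔ _
  rw [dotProduct_splitForm_mulVec]

lemma splitQuad_comp {S : Type*} [CommRing S] (f : R →+* S) (x : Fin n → R) :
    splitQuad (f ∘ x) = f (splitQuad x) := by
  simp [splitQuad]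

lemma comp_mem_unimodIsotropic {S : Type*} [CommRing S] (f : R →+* S) {x : Fin n → R}
    (hx : x ∈ unimodIsotropic R n) : f ∘ x ∈ unimodIsotropic S n := by
  rw [mem_unimodIsotropic_iff] at hx ⊢
  refine ⟨?_, by rw [splitQuad_comp, hx.2, map_zero]⟩
  rw [Set.range_comp, ← Ideal.map_span, hx.1, Ideal.map_top]

lemma splitQuad_eq_add_sum {j : Fin n} (hj : splitPartner n j ≠ j) (x : Fin n → R) :
    splitQuad x = 2 * (x j * x (splitPartner n j)) +
      ∑ k ∈ (Finset.univ.erase j).erase (splitPartner n j), x k * x (splitPartner n k) := by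
  rw [splitQuad, ← Finset.add_sum_erase _ _ (Finset.mem_univ j),
    ← Finset.add_sum_erase _ _ (Finset.mem_erase.2 ⟨hj, Finset.mem_univ _⟩),
    splitPartner_splitPartner]
  ring

lemma splitQuad_update_sub_splitQuad_update {j : Fin n} (hj : splitPartner n j ≠ j)
    (x : Fin n → R) (w w' : R) :
    splitQuad (Function.update x j w) - splitQuad (Function.update x j w') =
      2 * x (splitPartner n j) * (w - w') := by
  have hrest : ∀ k ∈ (Finset.univ.erase j).erase (splitPartner n j), ∀ v : R,
      Function.update x j v k * Function.update x j v (splitPartner n k) =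
        x k * x (splitPartner n k) := by
    intro k hk v
    obtain ⟨hkσ, hkj, -⟩ := by simpa only [Finset.mem_erase] using hk
    have hσk : splitPartner n k ≠ j := fun h => hkσ (by rw [← h, splitPartner_splitPartner])
    rw [Function.update_of_ne hkj, Function.update_of_ne hσk]
  rw [splitQuad_eq_add_sum hj, splitQuad_eq_add_sum hj, Finset.sum_congr rfl (hrest · · w),
    Finset.sum_congr rfl (hrest · · w'), Function.update_self, Function.update_self,
    Function.update_of_ne hj, Function.update_of_ne hj]
  ring

end SplitQuad

section Completion

variable {R : Type*} [CommRing R] {n : ℕ} {j : Fin n}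

lemma splitQuad_update_injective (hj : splitPartner n j ≠ j) {x : Fin n → R}
    (hu : IsUnit (2 * x (splitPartner n j))) :
    Function.Injective fun w => splitQuad (Function.update x j w) := by
  intro w w' h
  have := splitQuad_update_sub_splitQuad_update hj x w w'
  dsimp only at h
  rwa [h, sub_self, eq_comm, hu.mul_right_eq_zero, sub_eq_zero] at this

/-- Since `splitQuad` is affine in the coordinate `x j`, one Newton step solves it exactly. -/
lemma exists_update_splitQuad_eq_zero (hj : splitPartner n j ≠ j) {x : Fin n → R}
    (hu : IsUnit (2 * x (splitPartner n j))) :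
    ∃ w, splitQuad (Function.update x j w) = 0 ∧ w - x j ∈ Ideal.span {splitQuad x} := by
  refine ⟨x j - Ring.inverse (2 * x (splitPartner n j)) * splitQuad x, ?_, ?_⟩
  · have h := splitQuad_update_sub_splitQuad_update hj x
      (x j - Ring.inverse (2 * x (splitPartner n j)) * splitQuad x) (x j)
    rw [Function.update_eq_self] at h
    linear_combination h - splitQuad x * Ring.mul_inverse_cancel _ hu
  · rw [sub_sub_cancel_left]
    exact neg_mem (Ideal.mul_mem_left _ _ (Ideal.mem_span_singleton_self _))

end Completion

section LocalRing

variable {R : Type*} [CommRing R] [IsLocalRing R]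

lemma isUnit_two_of_ringChar_residueField_ne_two
    (h : ringChar (IsLocalRing.ResidueField R) ≠ 2) : IsUnit (2 : R) := by
  rw [← IsLocalRing.residue_ne_zero_iff_isUnit, map_ofNat]
  exact Ring.two_ne_zero h

lemma exists_isUnit_of_span_range_eq_top {ι : Type*} {x : ι → R}
    (hx : Ideal.span (Set.range x) = ⊤) : ∃ i, IsUnit (x i) := by
  by_contra! h
  refine (IsLocalRing.maximalIdeal.isMaximal R).ne_top (top_le_iff.1 ?_)
  rw [← hx, Ideal.span_le]
  rintro - ⟨i, rfl⟩
  exact h i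

lemma exists_isUnit_of_mem_unimodIsotropic {n : ℕ} {x : Fin n → R}
    (hx : x ∈ unimodIsotropic R n) : ∃ i, splitPartner n i ≠ i ∧ IsUnit (x i) := by
  rw [mem_unimodIsotropic_iff] at hx
  obtain ⟨i, hi⟩ := exists_isUnit_of_span_range_eq_top hx.1
  by_contra! h
  have hfix : splitPartner n i = i := by_contra fun hne => (h i hne) hi
  have hrest : ∑ k ∈ Finset.univ.erase i, x k * x (splitPartner n k) ∈
      IsLocalRing.maximalIdeal R := by
    refine Ideal.sum_mem _ fun k hk => Ideal.mul_mem_right _ _ ?_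
    exact h k fun hk' => (Finset.mem_erase.1 hk).1 (eq_of_splitPartner_eq_self hk' hfix)
  have hsq : x i * x i ∈ IsLocalRing.maximalIdeal R := by
    have hq := hx.2
    rw [splitQuad, ← Finset.add_sum_erase _ _ (Finset.mem_univ i), hfix] at hq
    rw [eq_neg_of_add_eq_zero_left hq]
    exact neg_mem hrest
  exact ((IsLocalRing.maximalIdeal.isMaximal R).isPrime.mem_or_mem hsq).elim id id hi

end LocalRing

lemma Nat.card_eq_card_mul_card_of_fiber_equiv {α β γ : Type*} (f : α → β)
    (e : ∀ b, {a // f a = b} ≃ γ) : Nat.card α = Nat.card β * Nat.card γ := by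
  rw [← Nat.card_prod]
  exact Nat.card_congr <| (Equiv.sigmaFiberEquiv f).symm.trans <|
    (Equiv.sigmaCongrRight e).trans (Equiv.sigmaEquivProd β γ)

namespace Ideal.Quotient

variable {R : Type*} [CommRing R] (I : Ideal R)

noncomputable def fiberEquiv (c : R ⧸ I) : {r : R // Ideal.Quotient.mk I r = c} ≃ I :=
  let r₀ := (Ideal.Quotient.mk_surjective c).choose
  have hr₀ : Ideal.Quotient.mk I r₀ = c := (Ideal.Quotient.mk_surjective c).choose_spec
  Equiv.subtypeEquiv (Equiv.subRight r₀) fun r => by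
    rw [← hr₀, Ideal.Quotient.mk_eq_mk_iff_sub_mem]
    rfl

noncomputable def liftsEquivPi {ι : Type*} (y : ι → R ⧸ I) :
    {z : ι → R // ∀ i, Ideal.Quotient.mk I (z i) = y i} ≃ (ι → I) :=
  Equiv.subtypePiEquivPi.trans (Equiv.piCongrRight fun i => fiberEquiv I (y i))

end Ideal.Quotient

section Fiber

variable {R : Type*} [CommRing R] {n : ℕ}

def unimodIsotropicMap {S : Type*} [CommRing S] (f : R →+* S) (x : unimodIsotropic R n) :
    unimodIsotropic S n :=
  ⟨f ∘ x, comp_mem_unimodIsotropic f x.2⟩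

variable (I : Ideal R) (y : unimodIsotropic (R ⧸ I) n)

abbrev reductionFiber : Type _ :=
  {x : unimodIsotropic R n // unimodIsotropicMap (Ideal.Quotient.mk I) x = y}

def reductionFiberRestrict (j : Fin n) (x : reductionFiber I y) :
    {z : {i // i ≠ j} → R // ∀ i, Ideal.Quotient.mk I (z i) = y.1 i} :=
  ⟨fun i => x.1.1 i, fun i => congrFun (congrArg Subtype.val x.2) i⟩

variable {I y} {j : Fin n}

lemma reductionFiberRestrict_injective (hj : splitPartner n j ≠ j)
    (hu : ∀ x : Fin n → R, Ideal.Quotient.mk I ∘ x = y.1 → IsUnit (2 * x (splitPartner n j))) :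
    Function.Injective (reductionFiberRestrict I y j) := by
  rintro ⟨⟨a, ha⟩, hay⟩ ⟨⟨b, hb⟩, hby⟩ hab
  have hoff : ∀ i (h : i ≠ j), a i = b i := fun i h =>
    congrFun (congrArg Subtype.val hab) ⟨i, h⟩
  have hb_eq : b = Function.update a j (b j) := by
    ext i
    by_cases h : i = j
    · subst h; simp
    · rw [Function.update_of_ne h, hoff i h]
  have hj_eq : a j = b j := by
    refine splitQuad_update_injective hj (hu a (congrArg Subtype.val hay)) ?_
    dsimp only
    rw [Function.update_eq_self, ← hb_eq, (mem_unimodIsotropic_iff.1 ha).2,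
      (mem_unimodIsotropic_iff.1 hb).2]
  have : a = b := by rw [hb_eq, ← hj_eq, Function.update_eq_self]
  subst this
  rfl

lemma reductionFiberRestrict_surjective (hj : splitPartner n j ≠ j)
    (hu : ∀ x : Fin n → R, Ideal.Quotient.mk I ∘ x = y.1 → IsUnit (2 * x (splitPartner n j))) :
    Function.Surjective (reductionFiberRestrict I y j) := by
  rintro ⟨z, hz⟩
  obtain ⟨c, hc⟩ := Ideal.Quotient.mk_surjective (y.1 j)
  set x : Fin n → R := fun i => if h : i = j then c else z ⟨i, h⟩ with hx
  have hxy : Ideal.Quotient.mk I ∘ x = y.1 := by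
    ext i
    by_cases h : i = j
    · subst h; simp [hx, hc]
    · simp [hx, h, hz]
  have hqx : splitQuad x ∈ I := by
    rw [← Ideal.Quotient.eq_zero_iff_mem, ← splitQuad_comp, hxy]
    exact (mem_unimodIsotropic_iff.1 y.2).2
  obtain ⟨w, hw, hwx⟩ := exists_update_splitQuad_eq_zero hj (hu x hxy)
  have hwc : Ideal.Quotient.mk I w = y.1 j := by
    rw [← hc, Ideal.Quotient.mk_eq_mk_iff_sub_mem]
    simpa [hx] using (Ideal.span_singleton_le_iff_mem I).2 hqx hwx
  have hmem : Function.update x j w ∈ unimodIsotropic R n := by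
    refine mem_unimodIsotropic_iff.2 ⟨?_, hw⟩
    refine Ideal.eq_top_of_isUnit_mem _
      (Ideal.subset_span (Set.mem_range_self (splitPartner n j))) ?_
    rw [Function.update_of_ne hj]
    exact isUnit_of_mul_isUnit_right (hu x hxy)
  refine ⟨⟨⟨_, hmem⟩, Subtype.ext ?_⟩, ?_⟩
  · ext i
    by_cases h : i = j
    · subst h; simpa [unimodIsotropicMap] using hwc
    · simp only [unimodIsotropicMap, Function.comp_apply, Function.update_of_ne h]
      exact congrFun hxy i
  · ext i
    simp [reductionFiberRestrict, hx, i.2]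

end Fiber

lemma nonempty_reductionFiber_equiv {R : Type*} [CommRing R] [IsLocalRing R]
    (h2 : IsUnit (2 : R)) {I : Ideal R} (hI : I ≠ ⊤) {n : ℕ} (y : unimodIsotropic (R ⧸ I) n) :
    Nonempty (reductionFiber I y ≃ (Fin (n - 1) → I)) := by
  have : Nontrivial (R ⧸ I) := Ideal.Quotient.nontrivial_iff.2 hI
  have : IsLocalRing (R ⧸ I) := .of_surjective' _ Ideal.Quotient.mk_surjective
  have : IsLocalHom (Ideal.Quotient.mk I) := isLocalHom_of_le_jacobson_bot I <| by
    rw [IsLocalRing.jacobson_eq_maximalIdeal ⊥ bot_ne_top]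
    exact IsLocalRing.le_maximalIdeal hI
  obtain ⟨i, hi, hyi⟩ := exists_isUnit_of_mem_unimodIsotropic y.2
  have hj : splitPartner n (splitPartner n i) ≠ splitPartner n i := by
    rw [splitPartner_splitPartner]
    exact hi.symm
  have hu : ∀ x : Fin n → R, Ideal.Quotient.mk I ∘ x = y.1 →
      IsUnit (2 * x (splitPartner n (splitPartner n i))) := by
    intro x hx
    rw [splitPartner_splitPartner]
    refine h2.mul ((isUnit_map_iff (Ideal.Quotient.mk I) _).1 ?_)
    rwa [← hx] at hyi
  have hcard : Fintype.card {k // k ≠ splitPartner n i} = n - 1 := by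
    simp [Fintype.card_subtype_compl]
  exact ⟨(Equiv.ofBijective _ ⟨reductionFiberRestrict_injective hj hu,
      reductionFiberRestrict_surjective hj hu⟩).trans <|
    (Ideal.Quotient.liftsEquivPi I _).trans <|
      Equiv.arrowCongr (Fintype.equivFinOfCardEq hcard) (Equiv.refl I)⟩

theorem unimod_isotropic_reduction_surjective_and_card_general
    {R : Type*} [CommRing R] [IsLocalRing R]
    (hchar : ringChar (IsLocalRing.ResidueField R) ≠ 2)
    (I : Ideal R) (hI : I ≠ ⊤) (n : ℕ) :
    (fun x : Fin n → R => (Ideal.Quotient.mk I) ∘ x) '' unimodIsotropic R n =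
        unimodIsotropic (R ⧸ I) n ∧
      Nat.card (unimodIsotropic R n) =
        Nat.card (unimodIsotropic (R ⧸ I) n) * Nat.card I ^ (n - 1) := by
  have fiber y := (nonempty_reductionFiber_equiv
    (isUnit_two_of_ringChar_residueField_ne_two hchar) hI (n := n) y).some
  constructor
  · refine Set.Subset.antisymm (Set.image_subset_iff.2 fun x hx =>
      comp_mem_unimodIsotropic _ hx) fun y hy => ?_
    obtain ⟨⟨x, hx⟩, hxy⟩ := (fiber ⟨y, hy⟩).symm fun _ => 0
    exact ⟨x, hx, congrArg Subtype.val hxy⟩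
  · rw [Nat.card_eq_card_mul_card_of_fiber_equiv _ fiber, Nat.card_fun, Nat.card_fin]

theorem unimod_isotropic_reduction_surjective_and_card
    {R : Type*} [CommRing R] [IsLocalRing R]
    (hchar : ringChar (IsLocalRing.ResidueField R) ≠ 2)
    (I : Ideal R) (hI : I ≠ ⊤) (n : ℕ) (hn : 2 ≤ n) :
    (fun x : Fin n → R => (Ideal.Quotient.mk I) ∘ x) '' unimodIsotropic R n =
        unimodIsotropic (R ⧸ I) n ∧
      Nat.card (unimodIsotropic R n) =
        Nat.card (unimodIsotropic (R ⧸ I) n) * Nat.card I ^ (n - 1) :=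
  unimod_isotropic_reduction_surjective_and_card_general hchar I hI n
end
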